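/- arXiv:2305.11335 — 2 statements merged into one kernel-verified Lean document; each statement's English description precedes it below -/
import Mathlib

section
/- Let d ≥ 1, let ε ≥ 0, and let a, b ∈ ℝ^d with side lengths s_i = b_i − a_i > 0 for every coordinate i satisfying the bounded aspect-ratio condition max_i s_i ≤ (1 + ε) · min_i s_i. Let c = (a + b)/2 be the midpoint and r = dist(a, b)/2 half the Euclidean diagonal of the box [a,b] = ∏_i [a_i, b_i]. Then the box [a,b] is contained in the closed Euclidean ball B(c, r), and the Lebesgue measures satisfy vol(B(c, r)) ≤ ((1 + ε) · √d / 2)^d · vol(B(0, 1)) · vol([a,b]), where B(0,1) is the closed unit ball of ℝ^d. -/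
/-!
Every point of the box is coordinatewise no farther from the centre than the corner `a` is, so the
box lies in the ball whose diameter is the diagonal. Each side is at least `1/(1 + ε)` times the
longest one, so `dist a b ≤ √d · (1 + ε) · s_j` for every `j`; hence `r ≤ K s_j` with
`K = (1 + ε)√d/2`, and multiplying over `j` gives `r^d ≤ K^d · vol [a,b]`.
-/

open MeasureTheory Metric Set

namespace EuclideanSpace

variable {ι : Type*} [Fintype ι]

theorem volume_setOf_forall_mem_Icc (a b : EuclideanSpace ℝ ι) :
    volume {x : EuclideanSpace ℝ ι | ∀ i, x i ∈ Icc (a i) (b i)} =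
      ∏ i, ENNReal.ofReal (b i - a i) := by
  have hbox : {x : EuclideanSpace ℝ ι | ∀ i, x i ∈ Icc (a i) (b i)} =
      (MeasurableEquiv.toLp 2 (ι → ℝ)).symm ⁻¹' univ.pi fun i => Icc (a i) (b i) := by
    ext x
    simp [Pi.le_def, forall_and]
  rw [hbox, (volume_preserving_symm_measurableEquiv_toLp ι).measure_preimage
    (MeasurableSet.univ_pi fun _ => measurableSet_Icc).nullMeasurableSet, volume_pi_pi]
  simp only [Real.volume_Icc]

theorem dist_le_dist_of_forall_dist_le {x y u v : EuclideanSpace ℝ ι}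
    (h : ∀ i, dist (x i) (y i) ≤ dist (u i) (v i)) : dist x y ≤ dist u v := by
  rw [dist_eq, dist_eq]
  gcongr with i
  exact h i

theorem dist_le_sqrt_card_mul {x y : EuclideanSpace ℝ ι} {C : ℝ} (hC : 0 ≤ C)
    (h : ∀ i, dist (x i) (y i) ≤ C) : dist x y ≤ √(Fintype.card ι) * C := by
  calc dist x y = √(∑ i, dist (x i) (y i) ^ 2) := dist_eq x y
    _ ≤ √(∑ _i : ι, C ^ 2) := by gcongr with i; exact h i
    _ = √(Fintype.card ι) * C := by
      rw [Finset.sum_const, Finset.card_univ, nsmul_eq_mul, Real.sqrt_mul (Nat.cast_nonneg _),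
        Real.sqrt_sq hC]

theorem midpoint_apply (a b : EuclideanSpace ℝ ι) (i : ι) :
    midpoint ℝ a b i = (a i + b i) / 2 := by
  simp [midpoint_eq_smul_add]
  ring

theorem setOf_forall_mem_Icc_subset_closedBall_midpoint (a b : EuclideanSpace ℝ ι) :
    {x : EuclideanSpace ℝ ι | ∀ i, x i ∈ Icc (a i) (b i)} ⊆
      closedBall (midpoint ℝ a b) (dist a b / 2) := by
  intro x hx
  have hr : dist a b / 2 = dist a (midpoint ℝ a b) := by
    rw [dist_left_midpoint]; norm_num; ring
  rw [mem_closedBall, hr]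
  refine dist_le_dist_of_forall_dist_le fun i => ?_
  obtain ⟨hax, hxb⟩ := hx i
  rw [midpoint_apply, Real.dist_eq, Real.dist_eq, abs_le, abs_of_nonpos (by linarith)]
  constructor <;> linarith

theorem volume_closedBall_le_of_le_mul_sides {a b : EuclideanSpace ℝ ι} (hab : ∀ i, a i ≤ b i)
    (c : EuclideanSpace ℝ ι) {r K : ℝ} (hr : 0 ≤ r) (hrK : ∀ i, r ≤ K * (b i - a i)) :
    volume (closedBall c r) ≤
      ENNReal.ofReal (K ^ Fintype.card ι) * volume (closedBall (0 : EuclideanSpace ℝ ι) 1) *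
        volume {x : EuclideanSpace ℝ ι | ∀ i, x i ∈ Icc (a i) (b i)} := by
  have hside : ∀ i, 0 ≤ b i - a i := fun i => sub_nonneg.2 (hab i)
  rw [Measure.addHaar_closedBall' _ _ hr, finrank_euclideanSpace, volume_setOf_forall_mem_Icc,
    mul_right_comm, ← ENNReal.ofReal_prod_of_nonneg fun i _ => hside i,
    ← ENNReal.ofReal_mul' (Finset.prod_nonneg fun i _ => hside i)]
  gcongr
  calc r ^ Fintype.card ι = ∏ _i : ι, r := by rw [Finset.prod_const, Finset.card_univ]
    _ ≤ ∏ i, K * (b i - a i) := Finset.prod_le_prod (fun _ _ => hr) fun i _ => hrK i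
    _ = K ^ Fintype.card ι * ∏ i, (b i - a i) := by
      rw [Finset.prod_mul_distrib, Finset.prod_const, Finset.card_univ]

end EuclideanSpace

open EuclideanSpace

theorem bounded_aspect_ratio_enclosing_ball_general (d : ℕ) (ε : ℝ)
    (a b : EuclideanSpace ℝ (Fin d)) (hab : ∀ i, a i < b i)
    (haspect : ∀ i j, b i - a i ≤ (1 + ε) * (b j - a j))
    (c : EuclideanSpace ℝ (Fin d)) (hc : ∀ i, c i = (a i + b i) / 2)
    (r : ℝ) (hr : r = dist a b / 2) :
    {x : EuclideanSpace ℝ (Fin d) | ∀ i, x i ∈ Set.Icc (a i) (b i)} ⊆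
        Metric.closedBall c r ∧
    MeasureTheory.volume (Metric.closedBall c r) ≤
      ENNReal.ofReal (((1 + ε) * Real.sqrt d / 2) ^ d) *
        MeasureTheory.volume (Metric.closedBall (0 : EuclideanSpace ℝ (Fin d)) 1) *
        MeasureTheory.volume
          {x : EuclideanSpace ℝ (Fin d) | ∀ i, x i ∈ Set.Icc (a i) (b i)} := by
  obtain rfl : c = midpoint ℝ a b := by
    ext i
    rw [hc, midpoint_apply]
  subst hr
  refine ⟨setOf_forall_mem_Icc_subset_closedBall_midpoint a b, ?_⟩
  have hside : ∀ i, dist (a i) (b i) = b i - a i := fun i => by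
    rw [dist_comm, Real.dist_eq, abs_of_pos (sub_pos.2 (hab i))]
  have hdiag : ∀ j, dist a b ≤ √d * ((1 + ε) * (b j - a j)) := fun j => by
    -- `haspect j j` forces `1 + ε ≥ 1`
    simpa using dist_le_sqrt_card_mul (by nlinarith [haspect j j, hab j]) fun i =>
      (hside i).trans_le (haspect i j)
  simpa only [Fintype.card_fin] using
    volume_closedBall_le_of_le_mul_sides (fun i => (hab i).le) (midpoint ℝ a b) (by positivity)
      fun j => by linarith [hdiag j]

theorem bounded_aspect_ratio_enclosing_ball (d : ℕ) (hd : 1 ≤ d) (ε : ℝ) (hε : 0 ≤ ε)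
    (a b : EuclideanSpace ℝ (Fin d)) (hab : ∀ i, a i < b i)
    (haspect : ∀ i j, b i - a i ≤ (1 + ε) * (b j - a j))
    (c : EuclideanSpace ℝ (Fin d)) (hc : ∀ i, c i = (a i + b i) / 2)
    (r : ℝ) (hr : r = dist a b / 2) :
    {x : EuclideanSpace ℝ (Fin d) | ∀ i, x i ∈ Set.Icc (a i) (b i)} ⊆
        Metric.closedBall c r ∧
    MeasureTheory.volume (Metric.closedBall c r) ≤
      ENNReal.ofReal (((1 + ε) * Real.sqrt d / 2) ^ d) *
        MeasureTheory.volume (Metric.closedBall (0 : EuclideanSpace ℝ (Fin d)) 1) *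
        MeasureTheory.volume
          {x : EuclideanSpace ℝ (Fin d) | ∀ i, x i ∈ Set.Icc (a i) (b i)} :=
  bounded_aspect_ratio_enclosing_ball_general d ε a b hab haspect c hc r hr
end

section
/- Let d ≥ 1 and let ℓ, L > 0. Let F be a finite family of axis-parallel boxes in ℝ^d with pairwise disjoint interiors, each of whose side lengths is at least ℓ. Suppose every box in F has nonempty intersection with a fixed axis-parallel box Q all of whose side lengths are at most L. Then the number of boxes in F is at most (L/ℓ + 2)^d. -/
theorem box_packing_bound (d : ℕ) (hd : 1 ≤ d) (ℓ L : ℝ) (hℓ : 0 < ℓ) (hL : 0 < L)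
    (F : Finset ((Fin d → ℝ) × (Fin d → ℝ)))
    (hside : ∀ p ∈ F, ∀ i, ℓ ≤ p.2 i - p.1 i)
    (hdisj : ∀ p ∈ F, ∀ q ∈ F, p ≠ q →
      interior (Set.univ.pi fun i => Set.Icc (p.1 i) (p.2 i)) ∩
        interior (Set.univ.pi fun i => Set.Icc (q.1 i) (q.2 i)) = ∅)
    (qa qb : Fin d → ℝ) (hq : ∀ i, qa i ≤ qb i) (hqL : ∀ i, qb i - qa i ≤ L)
    (hinter : ∀ p ∈ F,
      ((Set.univ.pi fun i => Set.Icc (p.1 i) (p.2 i)) ∩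
        (Set.univ.pi fun i => Set.Icc (qa i) (qb i))).Nonempty) :
    (F.card : ℝ) ≤ (L / ℓ + 2) ^ d := by
  classical
  set φ : ((Fin d → ℝ) × (Fin d → ℝ)) → (Fin d → ℤ) :=
    fun p i => max (⌊(p.1 i - qa i) / ℓ⌋ + 1) 0 with hφ
  -- grid point property
  have hgrid : ∀ p ∈ F, ∀ i, p.1 i < qa i + (φ p i : ℝ) * ℓ ∧ qa i + (φ p i : ℝ) * ℓ ≤ p.2 i := by
    intro p hp i
    obtain ⟨x, hx1, hx2⟩ := hinter p hp
    have hx1i := Set.mem_univ_pi.1 hx1 i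
    have hx2i := Set.mem_univ_pi.1 hx2 i
    simp only [Set.mem_Icc] at hx1i hx2i
    by_cases h : 0 ≤ ⌊(p.1 i - qa i) / ℓ⌋ + 1
    · have heq : φ p i = ⌊(p.1 i - qa i) / ℓ⌋ + 1 := max_eq_left h
      rw [heq]
      push_cast
      have h1 : (p.1 i - qa i) / ℓ < (⌊(p.1 i - qa i) / ℓ⌋ : ℝ) + 1 := Int.lt_floor_add_one _
      have h2 : (⌊(p.1 i - qa i) / ℓ⌋ : ℝ) ≤ (p.1 i - qa i) / ℓ := Int.floor_le _
      constructor
      · nlinarith [mul_lt_mul_of_pos_right h1 hℓ, div_mul_cancel₀ (p.1 i - qa i) hℓ.ne']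
      · have := hside p hp i
        nlinarith [mul_le_mul_of_nonneg_right h2 hℓ.le, div_mul_cancel₀ (p.1 i - qa i) hℓ.ne']
    · push_neg at h
      have heq : φ p i = 0 := max_eq_right (by omega)
      rw [heq]
      have hfl : ⌊(p.1 i - qa i) / ℓ⌋ < 0 := by omega
      have hneg : (p.1 i - qa i) / ℓ < 0 := by
        by_contra hc
        push_neg at hc
        exact absurd (Int.floor_nonneg.2 hc) (not_le.2 hfl)
      have hlt : p.1 i < qa i := by
        rcases div_neg_iff.1 hneg with ⟨h1, _⟩ | ⟨_, h2⟩
        · linarith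
        · linarith
      constructor
      · push_cast; linarith
      · push_cast; linarith [hx2i.1, hx1i.2]
  -- range bounds
  have hrange : ∀ p ∈ F, ∀ i, φ p i ∈ Finset.Icc (0 : ℤ) (⌊L / ℓ⌋ + 1) := by
    intro p hp i
    obtain ⟨x, hx1, hx2⟩ := hinter p hp
    have hx1i := Set.mem_univ_pi.1 hx1 i
    have hx2i := Set.mem_univ_pi.1 hx2 i
    simp only [Set.mem_Icc] at hx1i hx2i
    have hub : p.1 i ≤ qb i := le_trans hx1i.1 hx2i.2
    have h1 : (p.1 i - qa i) / ℓ ≤ L / ℓ := by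
      gcongr
      linarith [hqL i]
    have h2 : ⌊(p.1 i - qa i) / ℓ⌋ ≤ ⌊L / ℓ⌋ := Int.floor_le_floor h1
    have h3 : (0 : ℤ) ≤ ⌊L / ℓ⌋ := Int.floor_nonneg.2 (by positivity)
    simp only [Finset.mem_Icc]
    exact ⟨le_max_right _ _, max_le (by omega) (by omega)⟩
  -- interiors are open boxes
  have hint : ∀ a b : Fin d → ℝ,
      interior (Set.univ.pi fun i => Set.Icc (a i) (b i)) =
        Set.univ.pi fun i => Set.Ioo (a i) (b i) := by
    intro a b
    rw [interior_pi_set Set.finite_univ]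
    simp [interior_Icc]
  -- injectivity
  have hinj : Set.InjOn φ F := by
    intro p hp q hq' hpq
    by_contra hne
    set x : Fin d → ℝ := fun i => (max (p.1 i) (q.1 i) + (qa i + (φ p i : ℝ) * ℓ)) / 2 with hx
    have key : ∀ i, p.1 i < x i ∧ x i < p.2 i ∧ q.1 i < x i ∧ x i < q.2 i := by
      intro i
      have hgp := hgrid p hp i
      have hgq := hgrid q hq' i
      rw [← hpq] at hgq
      have hmax : max (p.1 i) (q.1 i) < qa i + (φ p i : ℝ) * ℓ := max_lt hgp.1 hgq.1
      have h1 : max (p.1 i) (q.1 i) < x i := by rw [hx]; dsimp only; linarith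
      have h2 : x i < qa i + (φ p i : ℝ) * ℓ := by rw [hx]; dsimp only; linarith
      exact ⟨lt_of_le_of_lt (le_max_left _ _) h1, lt_of_lt_of_le h2 hgp.2,
        lt_of_le_of_lt (le_max_right _ _) h1, lt_of_lt_of_le h2 hgq.2⟩
    have hxp : x ∈ interior (Set.univ.pi fun i => Set.Icc (p.1 i) (p.2 i)) := by
      rw [hint]
      exact Set.mem_univ_pi.2 fun i => ⟨(key i).1, (key i).2.1⟩
    have hxq : x ∈ interior (Set.univ.pi fun i => Set.Icc (q.1 i) (q.2 i)) := by
      rw [hint]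
      exact Set.mem_univ_pi.2 fun i => ⟨(key i).2.2.1, (key i).2.2.2⟩
    exact Set.eq_empty_iff_forall_notMem.1 (hdisj p hp q hq' hne) x ⟨hxp, hxq⟩
  -- counting
  have hcard : F.card ≤ (Fintype.piFinset fun _ : Fin d => Finset.Icc (0 : ℤ) (⌊L / ℓ⌋ + 1)).card := by
    apply Finset.card_le_card_of_injOn φ
    · intro p hp
      exact Fintype.mem_piFinset.2 (hrange p hp)
    · exact hinj
  have hS : (Fintype.piFinset fun _ : Fin d => Finset.Icc (0 : ℤ) (⌊L / ℓ⌋ + 1)).card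
      = (⌊L / ℓ⌋ + 2).toNat ^ d := by
    rw [Fintype.card_piFinset]
    simp [Int.card_Icc]
    congr 1
    omega
  rw [hS] at hcard
  have h3 : (0 : ℤ) ≤ ⌊L / ℓ⌋ := Int.floor_nonneg.2 (by positivity)
  calc (F.card : ℝ) ≤ (((⌊L / ℓ⌋ + 2).toNat : ℕ) : ℝ) ^ d := by exact_mod_cast hcard
    _ ≤ (L / ℓ + 2) ^ d := by
        apply pow_le_pow_left₀ (by positivity)
        have h4 : (((⌊L / ℓ⌋ + 2).toNat : ℕ) : ℝ) = (⌊L / ℓ⌋ : ℝ) + 2 := by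
          have h5 := Int.toNat_of_nonneg (show (0:ℤ) ≤ ⌊L / ℓ⌋ + 2 by omega)
          exact_mod_cast congrArg (Int.cast : ℤ → ℝ) h5
        rw [h4]
        linarith [Int.floor_le (L / ℓ)]
end
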